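/- arXiv:2011.12628 — 3 statements merged into one kernel-verified Lean document; each statement's English description precedes it below -/
import Mathlib

section
/- Nonstandard characterization of the derivative: let f : ℝ → ℝ, let x, L be real numbers, and let f* : ℝ* → ℝ* denote the hyperreal extension of f. Then f has derivative L at x (HasDerivAt f L x) if and only if for every infinitesimal hyperreal ε with ε ≠ 0, the hyperreal (f*((x : ℝ*) + ε) − (f x : ℝ*)) / ε − (L : ℝ*) is infinitesimal. -/
/-!
By `hasDerivAt_iff_tendsto_slope_zero` this is the nonstandard characterisation of the limit of
the difference quotient at a punctured neighbourhood of `0`. A nonzero infinitesimal is the class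
of a sequence tending to `0` through nonzero values along the hyperfilter. Conversely, if the
limit fails, `exists_seq_forall_of_frequently` gives a sequence tending to `0` along `atTop`,
hence along the hyperfilter, whose difference quotients stay outside a fixed neighbourhood of `L`.
-/

set_option linter.deprecated false

open Filter Topology

/-- The hyperreal extension `f*` of a real function `f`, given by applying `f`
pointwise to representing sequences (i.e., `Filter.Germ.map f`). -/
noncomputable def Hyperreal.extension (f : ℝ → ℝ) : ℝ* → ℝ* :=
  Filter.Germ.map f

theorem Filter.tendsto_iff_forall_tendsto_comp_of_le_atTop {α β : Type*} {l : Filter α}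
    [l.IsCountablyGenerated] {l' : Filter β} {g : α → β} {F : Filter ℕ} [F.NeBot]
    (hF : F ≤ atTop) :
    Tendsto g l l' ↔ ∀ u : ℕ → α, Tendsto u F l → Tendsto (g ∘ u) F l' := by
  refine ⟨fun hg u hu ↦ hg.comp hu, fun H ↦ ?_⟩
  by_contra hg
  obtain ⟨s, hs, hfreq⟩ := not_tendsto_iff_exists_frequently_notMem.1 hg
  obtain ⟨u, hu, hus⟩ := exists_seq_forall_of_frequently hfreq
  obtain ⟨n, hn⟩ := (H u (hu.mono_left hF) |>.eventually_mem hs).exists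
  exact hus n hn

theorem Hyperreal.infinitesimal_ofSeq_sub_coe_iff {u : ℕ → ℝ} {r : ℝ} :
    Infinitesimal (ofSeq u - r) ↔ Tendsto u (hyperfilter ℕ) (𝓝 r) :=
  isSt_ofSeq_iff_tendsto.trans tendsto_sub_nhds_zero_iff

theorem Hyperreal.ofSeq_ne_zero_iff {u : ℕ → ℝ} : ofSeq u ≠ 0 ↔ ∀ᶠ n in hyperfilter ℕ, u n ≠ 0 :=
  Germ.coe_eq.not.trans Ultrafilter.eventually_not.symm

theorem Hyperreal.infinitesimal_ofSeq_and_ne_zero_iff {u : ℕ → ℝ} :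
    Infinitesimal (ofSeq u) ∧ ofSeq u ≠ 0 ↔ Tendsto u (hyperfilter ℕ) (𝓝[≠] 0) := by
  rw [tendsto_nhdsWithin_iff, ofSeq_ne_zero_iff, Infinitesimal, isSt_ofSeq_iff_tendsto]
  rfl

theorem Hyperreal.tendsto_nhdsNE_zero_iff_infinitesimal (g : ℝ → ℝ) (b : ℝ) :
    Tendsto g (𝓝[≠] 0) (𝓝 b) ↔
      ∀ ε : ℝ*, Infinitesimal ε → ε ≠ 0 → Infinitesimal (extension g ε - b) := by
  rw [tendsto_iff_forall_tendsto_comp_of_le_atTop Nat.hyperfilter_le_atTop,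
    ofSeq_surjective.forall]
  refine forall_congr' fun u ↦ ?_
  rw [← and_imp, infinitesimal_ofSeq_and_ne_zero_iff]
  exact imp_congr_right fun _ ↦ infinitesimal_ofSeq_sub_coe_iff.symm

theorem Hyperreal.extension_slope_eq (f : ℝ → ℝ) (x : ℝ) (ε : ℝ*) :
    extension (fun t ↦ t⁻¹ • (f (x + t) - f x)) ε = (extension f (x + ε) - f x) / ε := by
  obtain ⟨u, rfl⟩ := ofSeq_surjective ε
  exact Germ.coe_eq.2 (.of_forall fun n ↦ by simp [div_eq_inv_mul])

theorem hasDerivAt_iff_infinitesimal (f : ℝ → ℝ) (x L : ℝ) :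
    HasDerivAt f L x ↔
      ∀ ε : ℝ*, Hyperreal.Infinitesimal ε → ε ≠ 0 →
        Hyperreal.Infinitesimal
          ((Hyperreal.extension f ((x : ℝ*) + ε) - ((f x : ℝ) : ℝ*)) / ε - (L : ℝ*)) := by
  simp only [hasDerivAt_iff_tendsto_slope_zero, Hyperreal.tendsto_nhdsNE_zero_iff_infinitesimal,
    Hyperreal.extension_slope_eq]
end

section
/- Nonstandard characterization of the epsilon-delta limit: let f : ℝ → ℝ, let c, L be real numbers, and let f* : ℝ* → ℝ* denote the hyperreal extension of f. Then f(x) tends to L as x tends to c with x ≠ c (i.e., Tendsto f (𝓝[≠] c) (𝓝 L)) if and only if for every hyperreal z with z ≠ (c : ℝ*) and z − (c : ℝ*) infinitesimal, the hyperreal f*(z) − (L : ℝ*) is infinitesimal. -/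
open Filter Topology

theorem tendsto_iff_infinitesimal (f : ℝ → ℝ) (c L : ℝ) :
    Tendsto f (𝓝[≠] c) (𝓝 L) ↔
      ∀ z : ℝ*, z ≠ (c : ℝ*) → Hyperreal.Infinitesimal (z - (c : ℝ*)) →
        Hyperreal.Infinitesimal (Hyperreal.extension f z - (L : ℝ*)) := by
  rw [Metric.tendsto_nhdsWithin_nhds]
  constructor
  · intro h z hne hinf
    obtain ⟨u, rfl⟩ := Hyperreal.ofSeq_surjective z
    rw [Hyperreal.infinitesimal_def]
    intro ε hε
    obtain ⟨δ, hδ, hd⟩ := h ε hε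
    have hclose : ∀ᶠ n in hyperfilter ℕ, |u n - c| < δ := by
      have h1 := (Hyperreal.infinitesimal_def.mp hinf δ hδ)
      have h2 : Hyperreal.ofSeq (fun n => u n - c) < Hyperreal.ofSeq (fun _ => δ) := h1.2
      have h3 : Hyperreal.ofSeq (fun _ => -δ) < Hyperreal.ofSeq (fun n => u n - c) := h1.1
      filter_upwards [Hyperreal.ofSeq_lt_ofSeq.mp h2, Hyperreal.ofSeq_lt_ofSeq.mp h3] with n
        ha hb
      rw [abs_lt]; exact ⟨hb, ha⟩
    have hnec : ∀ᶠ n in hyperfilter ℕ, u n ≠ c :=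
      (Ultrafilter.eventually_not (f := hyperfilter ℕ)).mpr
        fun h' => hne (Filter.Germ.coe_eq.mpr h')
    have key : ∀ᶠ n in hyperfilter ℕ, |f (u n) - L| < ε := by
      filter_upwards [hclose, hnec] with n h1 h2
      have := hd (x := u n) h2 (by rwa [Real.dist_eq])
      rwa [Real.dist_eq] at this
    have h2 : Hyperreal.ofSeq (fun _ => -ε) < Hyperreal.ofSeq (fun n => f (u n) - L) :=
      Hyperreal.ofSeq_lt_ofSeq.mpr (key.mono fun n hn => (abs_lt.mp hn).1)
    have h3 : Hyperreal.ofSeq (fun n => f (u n) - L) < Hyperreal.ofSeq (fun _ => ε) :=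
      Hyperreal.ofSeq_lt_ofSeq.mpr (key.mono fun n hn => (abs_lt.mp hn).2)
    exact ⟨h2, h3⟩
  · intro H
    by_contra hcon
    push_neg at hcon
    obtain ⟨ε, hε, hd⟩ := hcon
    have hx : ∀ n : ℕ, ∃ x : ℝ, x ≠ c ∧ |x - c| < 1 / (n + 1) ∧ ε ≤ |f x - L| := by
      intro n
      obtain ⟨x, hx1, hx2, hx3⟩ := hd (1 / (n + 1)) (by positivity)
      exact ⟨x, hx1, by rwa [Real.dist_eq] at hx2, by rwa [Real.dist_eq] at hx3⟩
    choose x hxne hxc hxf using hx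
    have htend : Tendsto (fun n => x n - c) atTop (𝓝 0) := by
      have h1 : Tendsto (fun n : ℕ => 1 / ((n : ℝ) + 1)) atTop (𝓝 0) :=
        tendsto_one_div_add_atTop_nhds_zero_nat
      refine squeeze_zero_norm (fun n => (hxc n).le) h1
    have hinf : Hyperreal.Infinitesimal (Hyperreal.ofSeq x - (c : ℝ*)) := by
      have : Hyperreal.ofSeq x - (c : ℝ*) = Hyperreal.ofSeq (fun n => x n - c) := rfl
      rw [this]
      exact Hyperreal.infinitesimal_of_tendsto_zero htend
    have hne : Hyperreal.ofSeq x ≠ (c : ℝ*) := by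
      intro h
      have : ∀ᶠ n in hyperfilter ℕ, x n = c := Filter.Germ.coe_eq.mp h
      rcases this.exists with ⟨n, hn⟩
      exact hxne n hn
    have := H (Hyperreal.ofSeq x) hne hinf
    have hlt := (Hyperreal.infinitesimal_def.mp this ε hε).2
    have : ∀ᶠ n in hyperfilter ℕ, f (x n) - L < ε := Hyperreal.ofSeq_lt_ofSeq.mp hlt
    have hlt2 := (Hyperreal.infinitesimal_def.mp (H (Hyperreal.ofSeq x) hne hinf) ε hε).1
    have h2 : ∀ᶠ n in hyperfilter ℕ, -ε < f (x n) - L := Hyperreal.ofSeq_lt_ofSeq.mp hlt2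
    rcases (this.and h2).exists with ⟨n, hn1, hn2⟩
    have h4 : ε ≤ |f (x n) - L| := hxf n
    have h5 : |f (x n) - L| < ε := abs_lt.mpr ⟨hn2, hn1⟩
    linarith
end

section
/- Status transitus of ellipses at an infinite parameter is a parabola (nonstandard version): let t be a positive infinite hyperreal and let x, y be real numbers. Then the hyperreal (x : ℝ*)² + 4·(y : ℝ*)²·(t + 1)/(t + 2)² − 4·(y : ℝ*)·(t + 1)/(t + 2) is infinitely close to (x² − 4y : ℝ*); i.e., their difference is infinitesimal. Hence the normalized equation of the ellipse with focal distance t, evaluated at the infinite value of the parameter, agrees up to an infinitesimal with the equation x² − 4y = 0 of the standard parabola. -/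
open Hyperreal

theorem status_transitus_parabola (t : ℝ*) (ht : InfinitePos t) (x y : ℝ) :
    Infinitesimal
      ((x : ℝ*) ^ 2 + 4 * (y : ℝ*) ^ 2 * (t + 1) / (t + 2) ^ 2
          - 4 * (y : ℝ*) * (t + 1) / (t + 2)
        - ((x ^ 2 - 4 * y : ℝ) : ℝ*)) := by
  have h2 : InfinitePos (t + 2) := by
    intro r
    have := ht (r - 2)
    push_cast at this ⊢
    linarith
  have hne : (t + 2) ≠ 0 := ne_of_gt (h2 0)
  have hinv : Infinitesimal (t + 2)⁻¹ :=
    infinitesimal_inv_of_infinite (Or.inl h2)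
  have hfrac : IsSt ((t + 1) / (t + 2)) 1 := by
    have : (t + 1) / (t + 2) = 1 - (t + 2)⁻¹ := by
      field_simp
      ring
    rw [this]
    have h1 : IsSt (1 : ℝ*) 1 := by exact_mod_cast isSt_refl_real 1
    simpa using h1.sub hinv
  have key : (x : ℝ*) ^ 2 + 4 * (y : ℝ*) ^ 2 * (t + 1) / (t + 2) ^ 2
          - 4 * (y : ℝ*) * (t + 1) / (t + 2) - ((x ^ 2 - 4 * y : ℝ) : ℝ*)
      = (4 * (y : ℝ*) ^ 2) * ((t + 1) / (t + 2)) * (t + 2)⁻¹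
        + (4 * (y : ℝ*)) * (t + 2)⁻¹ := by
    rw [Hyperreal.coe_sub, Hyperreal.coe_mul, pow_two x, Hyperreal.coe_mul, ← pow_two (x:ℝ*)]
    push_cast
    field_simp
    ring
  rw [key]
  have hy2 : IsSt ((4 * (y : ℝ*) ^ 2)) (4 * y ^ 2) := by
    have := isSt_refl_real (4 * y ^ 2)
    rwa [Hyperreal.coe_mul, pow_two y, Hyperreal.coe_mul, ← pow_two (y:ℝ*),
      show ((4:ℝ):ℝ*) = 4 by norm_cast, show (4 * (y * y) : ℝ) = 4 * y ^ 2 by ring] at this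
  have hy1 : IsSt ((4 * (y : ℝ*))) (4 * y) := by
    exact_mod_cast isSt_refl_real (4 * y)
  have t1 : Infinitesimal ((4 * (y : ℝ*) ^ 2) * ((t + 1) / (t + 2)) * (t + 2)⁻¹) := by
    have := (hy2.mul hfrac).mul hinv
    simpa [Infinitesimal] using this
  have t2 : Infinitesimal ((4 * (y : ℝ*)) * (t + 2)⁻¹) := by
    have := hy1.mul hinv
    simpa [Infinitesimal] using this
  exact t1.add t2
end
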